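/- arXiv:0804.3386 — 8 statements merged into one kernel-verified Lean document; each statement's English description precedes it below -/
import Mathlib

section
/- Any two countable graphs satisfying the extension property are isomorphic. -/
def ExtProp (G : SimpleGraph ℕ) : Prop :=
  ∀ U W : Finset ℕ, Disjoint U W →
    ∃ v : ℕ, v ∉ U ∧ v ∉ W ∧ (∀ u ∈ U, G.Adj v u) ∧ (∀ w ∈ W, ¬ G.Adj v w)

/-!
Back and forth: by the extension property, a finite partial isomorphism extends to any given
vertex on either side, so the finite partial isomorphisms defined at a given vertex form a
cofinal set. An ideal meeting all these countably many cofinal sets (Rasiowa–Sikorski) is a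
directed family whose union is a partial isomorphism defined everywhere and onto.
-/

open Order

namespace SimpleGraph

variable {V W : Type*} {G : SimpleGraph V} {G' : SimpleGraph W}

def IsPartialIso (G : SimpleGraph V) (G' : SimpleGraph W) (s : Set (V × W)) : Prop :=
  ∀ p ∈ s, ∀ q ∈ s, (p.1 = q.1 ↔ p.2 = q.2) ∧ (G.Adj p.1 q.1 ↔ G'.Adj p.2 q.2)

lemma isPartialIso_empty : IsPartialIso G G' ∅ := by
  simp [IsPartialIso]

lemma isPartialIso_insert {s : Set (V × W)} {p : V × W} :
    IsPartialIso G G' (insert p s) ↔ IsPartialIso G G' s ∧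
      ∀ q ∈ s, (p.1 = q.1 ↔ p.2 = q.2) ∧ (G.Adj p.1 q.1 ↔ G'.Adj p.2 q.2) := by
  refine ⟨fun h ↦ ⟨fun q hq r hr ↦ h q (.inr hq) r (.inr hr),
    fun q hq ↦ h p (.inl rfl) q (.inr hq)⟩, fun ⟨hs, hp⟩ ↦ ?_⟩
  rintro q (rfl | hq) r (rfl | hr)
  · simp
  · exact hp r hr
  · simpa [eq_comm, adj_comm] using hp q hq
  · exact hs q hq r hr

namespace IsPartialIso

lemma swap {s : Set (V × W)} (h : IsPartialIso G G' s) :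
    IsPartialIso G' G (Prod.swap ⁻¹' s) :=
  fun _ hp _ hq ↦ ⟨(h _ hp _ hq).1.symm, (h _ hp _ hq).2.symm⟩

lemma exists_insert_left {G' : SimpleGraph ℕ} (hG' : ExtProp G') {s : Set (V × ℕ)}
    (hs : s.Finite) (h : IsPartialIso G G' s) (a : V) :
    ∃ b, IsPartialIso G G' (insert (a, b) s) := by
  by_cases ha : ∃ b, (a, b) ∈ s
  · obtain ⟨b, hb⟩ := ha
    exact ⟨b, by rwa [Set.insert_eq_of_mem hb]⟩
  push Not at ha
  -- `v` is chosen adjacent exactly to the images of the neighbours of `a`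
  have hU : (Prod.snd '' {p ∈ s | G.Adj a p.1}).Finite :=
    (hs.subset (Set.sep_subset _ _)).image _
  have hW : (Prod.snd '' {p ∈ s | ¬G.Adj a p.1}).Finite :=
    (hs.subset (Set.sep_subset _ _)).image _
  have hdisj : Disjoint hU.toFinset hW.toFinset := by
    rw [Set.Finite.disjoint_toFinset, Set.disjoint_left]
    rintro _ ⟨p, ⟨hp, hpa⟩, rfl⟩ ⟨q, ⟨hq, hqa⟩, hpq⟩
    exact hqa ((h q hq p hp).1.2 hpq ▸ hpa)
  obtain ⟨v, hvU, hvW, hv_adj, hv_nadj⟩ := hG' _ _ hdisj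
  simp only [Set.Finite.mem_toFinset] at hvU hvW hv_adj hv_nadj
  refine ⟨v, isPartialIso_insert.2 ⟨h, fun q hq ↦ ⟨?_, ?_⟩⟩⟩
  · refine iff_of_false (fun hq1 ↦ ha q.2 (by rwa [show a = q.1 from hq1])) fun hv ↦ ?_
    by_cases hadj : G.Adj a q.1
    · exact hvU ⟨q, ⟨hq, hadj⟩, hv.symm⟩
    · exact hvW ⟨q, ⟨hq, hadj⟩, hv.symm⟩
  · refine ⟨fun hadj ↦ hv_adj _ ⟨q, ⟨hq, hadj⟩, rfl⟩, fun hadj ↦ ?_⟩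
    by_contra hnadj
    exact hv_nadj _ ⟨q, ⟨hq, hnadj⟩, rfl⟩ hadj

lemma exists_insert_right {G : SimpleGraph ℕ} (hG : ExtProp G) {s : Set (ℕ × W)}
    (hs : s.Finite) (h : IsPartialIso G G' s) (b : W) :
    ∃ a, IsPartialIso G G' (insert (a, b) s) := by
  obtain ⟨a, ha⟩ := exists_insert_left hG (hs.preimage Prod.swap_injective.injOn) h.swap b
  refine ⟨a, ?_⟩
  simpa [← Set.image_swap_eq_preimage_swap, Set.image_insert_eq, Set.image_image] using ha.swap

lemma nonempty_iso {s : Set (V × W)} (h : IsPartialIso G G' s) (hdom : ∀ a, ∃ b, (a, b) ∈ s)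
    (hcod : ∀ b, ∃ a, (a, b) ∈ s) : Nonempty (G ≃g G') := by
  choose f hf using hdom
  have hinj : f.Injective := fun a a' he ↦ (h _ (hf a) _ (hf a')).1.2 he
  have hsurj : f.Surjective := fun b ↦
    let ⟨a, ha⟩ := hcod b
    ⟨a, (h _ (hf a) _ ha).1.1 rfl⟩
  exact ⟨⟨Equiv.ofBijective f ⟨hinj, hsurj⟩, (h _ (hf _) _ (hf _)).2.symm⟩⟩

end IsPartialIso

abbrev FinPartialIso (G : SimpleGraph V) (G' : SimpleGraph W) : Type _ :=
  {s : Set (V × W) // s.Finite ∧ IsPartialIso G G' s}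

namespace FinPartialIso

instance : Inhabited (FinPartialIso G G') := ⟨⟨∅, Set.finite_empty, isPartialIso_empty⟩⟩

def definedAtLeft {G' : SimpleGraph ℕ} (hG' : ExtProp G') (a : V) :
    Cofinal (FinPartialIso G G') where
  carrier := {f | ∃ b, (a, b) ∈ f.1}
  isCofinal f :=
    let ⟨b, hb⟩ := f.2.2.exists_insert_left hG' f.2.1 a
    ⟨⟨_, f.2.1.insert _, hb⟩, ⟨b, Set.mem_insert _ _⟩, Set.subset_insert _ _⟩

def definedAtRight {G : SimpleGraph ℕ} (hG : ExtProp G) (b : W) :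
    Cofinal (FinPartialIso G G') where
  carrier := {f | ∃ a, (a, b) ∈ f.1}
  isCofinal f :=
    let ⟨a, ha⟩ := f.2.2.exists_insert_right hG f.2.1 b
    ⟨⟨_, f.2.1.insert _, ha⟩, ⟨a, Set.mem_insert _ _⟩, Set.subset_insert _ _⟩

lemma isPartialIso_iUnion (I : Ideal (FinPartialIso G G')) :
    IsPartialIso G G' (⋃ f ∈ I, f.1) := by
  intro p hp q hq
  obtain ⟨f, hf, hp⟩ := Set.mem_iUnion₂.1 hp
  obtain ⟨g, hg, hq⟩ := Set.mem_iUnion₂.1 hq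
  obtain ⟨k, -, hfk, hgk⟩ := I.directed f hf g hg
  exact k.2.2 p (hfk hp) q (hgk hq)

end FinPartialIso

end SimpleGraph

open SimpleGraph.FinPartialIso

theorem extension_unique_up_to_iso (G G' : SimpleGraph ℕ)
    (hG : ExtProp G) (hG' : ExtProp G') : Nonempty (G ≃g G') := by
  let D := Sum.elim (definedAtLeft (G := G) hG') (definedAtRight hG)
  let I := idealOfCofinals default D
  refine (isPartialIso_iUnion I).nonempty_iso (fun a ↦ ?_) (fun b ↦ ?_)
  · obtain ⟨f, ⟨b, hb⟩, hf⟩ := cofinal_meets_idealOfCofinals default D (.inl a)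
    exact ⟨b, Set.mem_biUnion hf hb⟩
  · obtain ⟨f, ⟨a, ha⟩, hf⟩ := cofinal_meets_idealOfCofinals default D (.inr b)
    exact ⟨a, Set.mem_biUnion hf ha⟩
end

section
/- There is no universal K₄-free graph structure on ℤ that is shift-invariant. More precisely: there is no symmetric set Z ⊆ ℤ \ {0} such that the graph on ℤ with edges {(x,y) : x − y ∈ Z} is K₄-free and satisfies the K₄-free extension property (for any disjoint finite sets U, W with U triangle-free in the induced graph, some vertex is joined to all of U and none of W). -/
/-!
Pick `z ∈ Z`, and by the extension property some `s ∈ Z` with `s ± z ∉ Z`. Then `s + z, s, 0, z`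
spans a 4-cycle whose diagonals are non-edges, so it is triangle-free and has a common
neighbour `v`. By translation invariance `v - z` is adjacent to `s` and `0`, and
`{v, v - z, s, 0}` is a `K₄`.
-/

theorem not_exists_triangle_of_diagonals {α : Type*} [DecidableEq α] {R : α → α → Prop}
    (hirr : ∀ a, ¬ R a a) (hsymm : ∀ a b, R a b → R b a) {w x y z : α}
    (hwy : ¬ R w y) (hxz : ¬ R x z) :
    ¬ ∃ a ∈ ({w, x, y, z} : Finset α), ∃ b ∈ ({w, x, y, z} : Finset α),
      ∃ c ∈ ({w, x, y, z} : Finset α), R a b ∧ R a c ∧ R b c := by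
  have hyw : ¬ R y w := fun h => hwy (hsymm _ _ h)
  have hzx : ¬ R z x := fun h => hxz (hsymm _ _ h)
  rintro ⟨a, ha, b, hb, c, hc, hab, hac, hbc⟩
  simp only [Finset.mem_insert, Finset.mem_singleton] at ha hb hc
  rcases ha with rfl | rfl | rfl | rfl <;> rcases hb with rfl | rfl | rfl | rfl <;>
    rcases hc with rfl | rfl | rfl | rfl <;> first | exact hirr _ ‹_› | contradiction

section

variable {G : Type*}

def HasK4FreeExtensionProperty [Sub G] (Z : Set G) : Prop :=
  ∀ U W : Finset G, Disjoint U W →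
    (¬ ∃ a ∈ U, ∃ b ∈ U, ∃ c ∈ U, a - b ∈ Z ∧ a - c ∈ Z ∧ b - c ∈ Z) →
    ∃ v : G, v ∉ U ∧ v ∉ W ∧ (∀ u ∈ U, v - u ∈ Z) ∧ (∀ w ∈ W, v - w ∉ Z)

theorem HasK4FreeExtensionProperty.exists_mem_forall_sub_notMem [AddGroup G] {Z : Set G}
    (hext : HasK4FreeExtensionProperty Z) (h0 : (0 : G) ∉ Z) {W : Finset G} (hW : 0 ∉ W) :
    ∃ s ∈ Z, ∀ w ∈ W, s - w ∉ Z := by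
  have hfree : ¬ ∃ a ∈ ({0} : Finset G), ∃ b ∈ ({0} : Finset G), ∃ c ∈ ({0} : Finset G),
      a - b ∈ Z ∧ a - c ∈ Z ∧ b - c ∈ Z := by
    rintro ⟨a, ha, b, hb, -, -, hab, -⟩
    rw [Finset.mem_singleton] at ha hb
    subst ha hb
    exact h0 (by simpa using hab)
  obtain ⟨s, -, -, hs, hsW⟩ := hext {0} W (Finset.disjoint_singleton_left.2 hW) hfree
  exact ⟨s, by simpa using hs 0 (Finset.mem_singleton_self 0), hsW⟩

theorem HasK4FreeExtensionProperty.exists_K4 [AddCommGroup G] [DecidableEq G] {Z : Set G}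
    (hext : HasK4FreeExtensionProperty Z) (hsym : ∀ z ∈ Z, -z ∈ Z) (h0 : (0 : G) ∉ Z) :
    ∃ a b c d : G, a - b ∈ Z ∧ a - c ∈ Z ∧ a - d ∈ Z ∧ b - c ∈ Z ∧ b - d ∈ Z ∧ c - d ∈ Z := by
  obtain ⟨z, hz, -⟩ := hext.exists_mem_forall_sub_notMem h0 (W := ∅) (Finset.notMem_empty 0)
  have hz0 : z ≠ 0 := fun h => h0 (h ▸ hz)
  obtain ⟨s, hs, hsW⟩ := hext.exists_mem_forall_sub_notMem h0 (W := {z, -z})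
    (by simp [eq_comm, hz0])
  have hsz : s - z ∉ Z := hsW z (by simp)
  have hsz' : s + z ∉ Z := by simpa using hsW (-z) (by simp)
  have hcycle : ¬ ∃ a ∈ ({s + z, s, 0, z} : Finset G), ∃ b ∈ ({s + z, s, 0, z} : Finset G),
      ∃ c ∈ ({s + z, s, 0, z} : Finset G), a - b ∈ Z ∧ a - c ∈ Z ∧ b - c ∈ Z :=
    not_exists_triangle_of_diagonals (R := fun a b => a - b ∈ Z)
      (fun a h => h0 (by simpa using h)) (fun a b h => by simpa using hsym _ h)
      (by simpa using hsz') hsz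
  obtain ⟨v, -, -, hv, -⟩ := hext _ ∅ (Finset.disjoint_empty_right _) hcycle
  refine ⟨v, v - z, s, 0, by simpa using hz, hv s (by simp), hv 0 (by simp), ?_,
    by simpa using hv z (by simp), by simpa using hs⟩
  simpa [sub_sub, add_comm] using hv (s + z) (by simp)

end

/-- There is no shift-invariant universal K₄-free graph structure on ℤ. -/
theorem no_shift_invariant_universal_K4_free_on_int :
    ¬ ∃ Z : Set ℤ, (∀ z ∈ Z, -z ∈ Z) ∧ (0 : ℤ) ∉ Z ∧
      -- K₄-free
      (¬ ∃ a b c d : ℤ, a - b ∈ Z ∧ a - c ∈ Z ∧ a - d ∈ Z ∧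
        b - c ∈ Z ∧ b - d ∈ Z ∧ c - d ∈ Z) ∧
      -- K₄-free extension property
      (∀ U W : Finset ℤ, Disjoint U W →
        (¬ ∃ a ∈ U, ∃ b ∈ U, ∃ c ∈ U, a - b ∈ Z ∧ a - c ∈ Z ∧ b - c ∈ Z) →
        ∃ v : ℤ, v ∉ U ∧ v ∉ W ∧ (∀ u ∈ U, v - u ∈ Z) ∧ (∀ w ∈ W, v - w ∉ Z)) := by
  rintro ⟨Z, hsym, h0, hK4, hext⟩
  exact hK4 (HasK4FreeExtensionProperty.exists_K4 hext hsym h0)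
end

section
/- There exists a closed symmetric set Z ⊆ (0, ∞) (a countable union of closed intervals) such that the shift-invariant graph on ℝ with edge relation x ~ y iff |x − y| ∈ Z is topologically universal: for every pair of disjoint finite sets {x₁,…,xₙ}, {y₁,…,yₘ} ⊂ ℝ, the set of points c with |c − xᵢ| ∈ Z for all i and |c − yⱼ| ∉ Z for all j has nonempty interior. -/
/-!
Enumerate all pairs `(L, g)` of a finite list `L` of rational intervals and a width `g ∈ ℕ`.
The `n`-th pair is placed as a block of intervals `blockStart n + L`, clipped to
`[blockStart n, blockStart n + g]`, with a gap of length `1` before the next block; the union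
of the blocks is the distance set `Z`, closed because the blocks march off to infinity.
Given disjoint finite `U` and `W`, separated by more than `4η`, take a rational `t` to the right of
`U ∪ W`, rational `η`-approximations `q u` of the points of `U`, and the block carrying the
intervals `[t - q u - 2η, t - q u + 2η]` with a width `g` large enough. For `c` within `η` of
`blockStart n + t`, every `c - u` lies in one of these intervals, while every `c - w` lies in the
same block but misses all of them.
-/

open Set Function

lemma Finset.exists_pos_forall_lt_dist_of_disjoint {X : Type*} [MetricSpace X] {s t : Finset X}
    (hst : Disjoint s t) : ∃ r > 0, ∀ x ∈ s, ∀ y ∈ t, r < dist x y := by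
  obtain ⟨r, hr, h⟩ := Metric.exists_pos_forall_lt_edist s.finite_toSet.isCompact
    t.finite_toSet.isClosed (Finset.disjoint_coe.2 hst)
  refine ⟨r, hr, fun x hx y hy => ?_⟩
  have := h x hx y hy
  rwa [edist_nndist, ENNReal.coe_lt_coe, ← NNReal.coe_lt_coe] at this

lemma iUnion_biUnion_list_eq_iUnion_unpair {α β : Type*} (l : ℕ → List α) (F : ℕ → α → Set β)
    (d : α) (hd : ∀ n, F n d = ∅) :
    ⋃ n, ⋃ p ∈ l n, F n p = ⋃ k : ℕ, F k.unpair.1 ((l k.unpair.1).getD k.unpair.2 d) := by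
  ext x
  simp only [mem_iUnion, exists_prop]
  constructor
  · rintro ⟨n, p, hp, hx⟩
    obtain ⟨i, hi, rfl⟩ := List.mem_iff_getElem.1 hp
    exact ⟨Nat.pair n i, by rwa [Nat.unpair_pair, List.getD_eq_getElem _ _ hi]⟩
  · rintro ⟨k, hx⟩
    by_cases hi : k.unpair.2 < (l k.unpair.1).length
    · rw [List.getD_eq_getElem _ _ hi] at hx
      exact ⟨_, _, List.getElem_mem hi, hx⟩
    · rw [List.getD_eq_default _ _ (not_lt.1 hi), hd] at hx
      exact absurd hx (notMem_empty x)

namespace UniversalDistanceSet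

variable (e : ℕ → List (ℚ × ℚ) × ℕ)

noncomputable def blockStart : ℕ → ℝ
  | 0 => 1
  | n + 1 => blockStart n + (e n).2 + 1

noncomputable def blockEnds (n : ℕ) (p : ℚ × ℚ) : ℝ × ℝ :=
  (blockStart e n + max (p.1 : ℝ) 0, blockStart e n + min (p.2 : ℝ) (e n).2)

def block (n : ℕ) : Set ℝ :=
  ⋃ p ∈ (e n).1, Icc (blockEnds e n p).1 (blockEnds e n p).2

def distanceSet : Set ℝ := ⋃ n, block e n

variable {e}

lemma blockStart_succ (n : ℕ) : blockStart e (n + 1) = blockStart e n + (e n).2 + 1 := rfl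

lemma natCast_lt_blockStart (n : ℕ) : (n : ℝ) < blockStart e n := by
  induction n with
  | zero => simp [blockStart]
  | succ n ih => rw [blockStart_succ]; push_cast; linarith [(e n).2.cast_nonneg (α := ℝ)]

lemma blockStart_pos (n : ℕ) : 0 < blockStart e n :=
  n.cast_nonneg.trans_lt (natCast_lt_blockStart n)

lemma blockStart_mono : Monotone (blockStart e) :=
  monotone_nat_of_le_succ fun n => by rw [blockStart_succ]; linarith [(e n).2.cast_nonneg (α := ℝ)]

lemma blockStart_add_lt_of_lt {m n : ℕ} (h : m < n) :
    blockStart e m + (e m).2 < blockStart e n := by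
  have := blockStart_mono (e := e) h
  rw [blockStart_succ] at this
  linarith

lemma block_subset_Icc (n : ℕ) : block e n ⊆ Icc (blockStart e n) (blockStart e n + (e n).2) := by
  simp only [block, iUnion_subset_iff]
  intro p _ x hx
  simp only [blockEnds, mem_Icc] at hx
  exact ⟨by linarith [hx.1, le_max_right (p.1 : ℝ) 0],
    by linarith [hx.2, min_le_right (p.2 : ℝ) (e n).2]⟩

lemma locallyFinite_block : LocallyFinite (block e) := by
  intro x
  obtain ⟨N, hN⟩ := exists_nat_gt x
  refine ⟨Iio (blockStart e N), Iio_mem_nhds (hN.trans (natCast_lt_blockStart N)),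
    (finite_Iio N).subset ?_⟩
  rintro n ⟨y, hyn, hyN⟩
  rw [mem_Iio]
  by_contra! hNn
  linarith [(block_subset_Icc n hyn).1, blockStart_mono (e := e) hNn, mem_Iio.1 hyN]

lemma isClosed_distanceSet : IsClosed (distanceSet e) :=
  locallyFinite_block.isClosed_iUnion fun _ =>
    (List.finite_toSet _).isClosed_biUnion fun _ _ => isClosed_Icc

lemma distanceSet_subset_Ioi : distanceSet e ⊆ Ioi 0 := by
  simp only [distanceSet, iUnion_subset_iff]
  intro n x hx
  exact (blockStart_pos n).trans_le (block_subset_Icc n hx).1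

lemma exists_eq_iUnion_Icc : ∃ I : ℕ → ℝ × ℝ, distanceSet e = ⋃ k, Icc (I k).1 (I k).2 :=
  ⟨fun k => blockEnds e k.unpair.1 ((e k.unpair.1).1.getD k.unpair.2 (1, 0)),
    iUnion_biUnion_list_eq_iUnion_unpair _ (fun n p => Icc (blockEnds e n p).1 (blockEnds e n p).2)
      _ fun n => Icc_eq_empty (by simp [blockEnds])⟩

lemma mem_distanceSet_of_mem_pattern {n : ℕ} {p : ℚ × ℚ} (hp : p ∈ (e n).1) (h0 : 0 ≤ p.1)
    (hg : p.2 ≤ (e n).2) {x : ℝ} (hx : x ∈ Icc (blockStart e n + p.1) (blockStart e n + p.2)) :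
    x ∈ distanceSet e := by
  refine mem_iUnion.2 ⟨n, mem_biUnion hp ?_⟩
  have h0 : (0 : ℝ) ≤ p.1 := by exact_mod_cast h0
  have hg : (p.2 : ℝ) ≤ (e n).2 := by exact_mod_cast hg
  simpa only [blockEnds, max_eq_left h0, min_eq_left hg] using hx

lemma exists_mem_pattern_of_mem_distanceSet {n : ℕ} {x : ℝ} (hx : x ∈ distanceSet e)
    (h₁ : blockStart e n ≤ x) (h₂ : x < blockStart e n + (e n).2 + 1) :
    ∃ p ∈ (e n).1, x ∈ Icc (blockStart e n + p.1) (blockStart e n + p.2) := by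
  obtain ⟨m, hm⟩ := mem_iUnion.1 hx
  obtain rfl : n = m := by
    have hxm := block_subset_Icc m hm
    rcases lt_trichotomy m n with h | rfl | h
    · linarith [blockStart_add_lt_of_lt (e := e) h, hxm.2]
    · rfl
    · linarith [blockStart_mono (e := e) (Nat.succ_le_of_lt h), blockStart_succ (e := e) n, hxm.1]
  obtain ⟨p, hp, hxp⟩ := mem_iUnion₂.1 hm
  simp only [blockEnds, mem_Icc] at hxp
  exact ⟨p, hp, by linarith [hxp.1, le_max_left (p.1 : ℝ) 0],
    by linarith [hxp.2, min_le_left (p.2 : ℝ) (e n).2]⟩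

section Realisation

variable {U W : Finset ℝ} {η t : ℚ} {q : ℝ → ℚ} {n : ℕ}

lemma abs_sub_mem_distanceSet (hq : ∀ u ∈ U, dist u (q u) < η)
    (hbound : ∀ u ∈ U, 3 * η ≤ t - u ∧ t - u + 3 * η ≤ (e n).2)
    (hn : (e n).1 = U.toList.map fun u => (t - q u - 2 * η, t - q u + 2 * η))
    {c : ℝ} (hc : c ∈ Ioo (blockStart e n + t - η) (blockStart e n + t + η))
    {u : ℝ} (hu : u ∈ U) :
    |c - u| ∈ distanceSet e := by
  obtain ⟨hq₁, hq₂⟩ := abs_sub_lt_iff.1 (Real.dist_eq u (q u) ▸ hq u hu)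
  obtain ⟨hb₁, hb₂⟩ := hbound u hu
  rw [abs_of_pos (by linarith [hc.1, blockStart_pos (e := e) n])]
  refine mem_distanceSet_of_mem_pattern (p := (t - q u - 2 * η, t - q u + 2 * η))
    (hn ▸ List.mem_map_of_mem (Finset.mem_toList.2 hu)) ?_ ?_ ?_
  · exact_mod_cast (by push_cast; linarith : (0 : ℝ) ≤ ((t - q u - 2 * η : ℚ) : ℝ))
  · exact_mod_cast (by push_cast; linarith : ((t - q u + 2 * η : ℚ) : ℝ) ≤ (e n).2)
  · push_cast
    exact ⟨by linarith [hc.1], by linarith [hc.2]⟩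

lemma abs_sub_notMem_distanceSet (hη : (0 : ℝ) < η) (hq : ∀ u ∈ U, dist u (q u) < η)
    (hsep : ∀ u ∈ U, ∀ w ∈ W, 4 * η < dist u w)
    (hbound : ∀ w ∈ W, 3 * η ≤ t - w ∧ t - w + 3 * η ≤ (e n).2)
    (hn : (e n).1 = U.toList.map fun u => (t - q u - 2 * η, t - q u + 2 * η))
    {c : ℝ} (hc : c ∈ Ioo (blockStart e n + t - η) (blockStart e n + t + η))
    {w : ℝ} (hw : w ∈ W) :
    |c - w| ∉ distanceSet e := by
  obtain ⟨hb₁, hb₂⟩ := hbound w hw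
  rw [abs_of_pos (by linarith [hc.1, blockStart_pos (e := e) n])]
  intro hmem
  obtain ⟨p, hp, hcp⟩ := exists_mem_pattern_of_mem_distanceSet (n := n) hmem
    (by linarith [hc.1]) (by linarith [hc.2])
  obtain ⟨u, hu, rfl⟩ := List.mem_map.1 (hn ▸ hp)
  have hu := Finset.mem_toList.1 hu
  obtain ⟨hq₁, hq₂⟩ := abs_sub_lt_iff.1 (Real.dist_eq u (q u) ▸ hq u hu)
  have huw := Real.dist_eq u w ▸ hsep u hu w hw
  push_cast at hcp
  rcases abs_cases (u - w) with ⟨h, -⟩ | ⟨h, -⟩ <;>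
    linarith [hcp.1, hcp.2, hc.1, hc.2]

lemma Ioo_subset_setOf_adj (hη : (0 : ℝ) < η) (hq : ∀ u ∈ U, dist u (q u) < η)
    (hsep : ∀ u ∈ U, ∀ w ∈ W, 4 * η < dist u w)
    (hbound : ∀ x ∈ U ∪ W, 3 * η ≤ t - x ∧ t - x + 3 * η ≤ (e n).2)
    (hn : (e n).1 = U.toList.map fun u => (t - q u - 2 * η, t - q u + 2 * η)) :
    Ioo (blockStart e n + t - η) (blockStart e n + t + η) ⊆
      {c | (∀ u ∈ U, |c - u| ∈ distanceSet e) ∧ ∀ w ∈ W, |c - w| ∉ distanceSet e} :=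
  fun _ hc =>
    ⟨fun _ hu => abs_sub_mem_distanceSet hq
        (fun u hu => hbound u (Finset.mem_union_left W hu)) hn hc hu,
      fun _ hw => abs_sub_notMem_distanceSet hη hq hsep
        (fun w hw => hbound w (Finset.mem_union_right U hw)) hn hc hw⟩

end Realisation

theorem interior_setOf_adj_nonempty (he : Surjective e) {U W : Finset ℝ} (hUW : Disjoint U W) :
    (interior {c : ℝ | (∀ u ∈ U, |c - u| ∈ distanceSet e) ∧
      ∀ w ∈ W, |c - w| ∉ distanceSet e}).Nonempty := by
  obtain ⟨r, hr, hsep⟩ := Finset.exists_pos_forall_lt_dist_of_disjoint hUW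
  obtain ⟨η, hη, hηr⟩ := exists_rat_btwn (div_pos hr four_pos)
  choose q hq using fun u : ℝ => Metric.denseRange_iff.1 Rat.denseRange_cast u η hη
  obtain ⟨R, hR⟩ := isBounded_iff_forall_norm_le.1 (U ∪ W).finite_toSet.isBounded
  obtain ⟨t, ht⟩ := exists_rat_gt (R + 3 * η)
  obtain ⟨g, hg⟩ := exists_nat_ge (t + R + 3 * η)
  have hbound : ∀ x ∈ U ∪ W, 3 * η ≤ t - x ∧ t - x + 3 * η ≤ g := fun x hx => by
    have := abs_le.1 (hR x (Finset.mem_coe.2 hx))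
    constructor <;> linarith
  obtain ⟨n, hn⟩ := he (U.toList.map fun u => (t - q u - 2 * η, t - q u + 2 * η), g)
  have hsub := Ioo_subset_setOf_adj (e := e) (n := n) hη (fun u _ => hq u)
    (fun u hu w hw => by linarith [hsep u hu w hw]) (by rwa [hn]) (by rw [hn])
  exact ⟨blockStart e n + t, interior_maximal hsub isOpen_Ioo ⟨by linarith, by linarith⟩⟩

end UniversalDistanceSet

/-- There is a closed set Z ⊆ (0,∞) (a countable union of closed intervals) such that
the shift-invariant graph x ~ y ↔ |x - y| ∈ Z on ℝ is topologically universal. -/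
theorem exists_topologically_universal_shift_invariant_graph :
    ∃ Z : Set ℝ, IsClosed Z ∧ Z ⊆ Set.Ioi (0 : ℝ) ∧
      (∃ I : ℕ → ℝ × ℝ, Z = ⋃ n : ℕ, Set.Icc (I n).1 (I n).2) ∧
      ∀ U W : Finset ℝ, Disjoint U W →
        (interior {c : ℝ | (∀ u ∈ U, |c - u| ∈ Z) ∧ ∀ w ∈ W, |c - w| ∉ Z}).Nonempty := by
  obtain ⟨e, he⟩ : ∃ e : ℕ → List (ℚ × ℚ) × ℕ, Surjective e :=
    ⟨Denumerable.ofNat _, fun d => ⟨_, Denumerable.ofNat_encode d⟩⟩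
  exact ⟨UniversalDistanceSet.distanceSet e, UniversalDistanceSet.isClosed_distanceSet,
    UniversalDistanceSet.distanceSet_subset_Ioi, UniversalDistanceSet.exists_eq_iUnion_Icc,
    fun _ _ => UniversalDistanceSet.interior_setOf_adj_nonempty he⟩
end

section
/- Let (X, E) be a topologically universal graph on a Polish space X, i.e., for all disjoint finite sets {x₁,…,xₙ}, {y₁,…,yₘ} ⊂ X the set ⋂ᵢ E_{xᵢ} ∩ ⋂ⱼ (X \ E_{yⱼ}) has nonempty interior, where E_x = {y : (x,y) ∈ E}. Then for every Borel probability measure m on X that is positive on every nonempty open set, for m^∞-almost every sequence (x_k) ∈ X^ℕ of i.i.d. points, the induced countable graph on {x_k} (with edges (x_i, x_j) ∈ E) satisfies the extension property of the universal graph. -/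
open MeasureTheory

/-- μ is the law of an i.i.d. sequence with marginal m (the infinite product measure m^∞),
characterized by its finite-dimensional distributions. -/
def IsIID {X : Type*} [MeasurableSpace X] (m : Measure X) (μ : Measure (ℕ → X)) : Prop :=
  IsProbabilityMeasure μ ∧
  ∀ n : ℕ, Measure.map (fun x (i : Fin n) => x (i : ℕ)) μ = Measure.pi (fun _ : Fin n => m)

/-! Almost every i.i.d. sequence is dense, because it stays outside a fixed basic open set `b` with
probability at most `m bᶜ ^ n` for every `n`. Since `E` is symmetric, a point of the sequence lying
in the nonempty open set given by topological universality is the required extension vertex. -/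

namespace IsIID

open TopologicalSpace

variable {X : Type*} [MeasurableSpace X] {m : Measure X} {μ : Measure (ℕ → X)}

theorem measure_forall_mem_le_pow [SigmaFinite m] (hμ : IsIID m μ) (s : Set X) (n : ℕ) :
    μ {x | ∀ k, x k ∈ s} ≤ m s ^ n := by
  have hproj : Measurable (fun (x : ℕ → X) (i : Fin n) => x (i : ℕ)) :=
    measurable_pi_lambda _ fun i => measurable_pi_apply _
  calc μ {x | ∀ k, x k ∈ s}
      ≤ μ ((fun x (i : Fin n) => x (i : ℕ)) ⁻¹' Set.univ.pi fun _ => s) :=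
        measure_mono fun x hx i _ => hx i
    _ ≤ μ.map (fun x (i : Fin n) => x (i : ℕ)) (Set.univ.pi fun _ => s) :=
        Measure.le_map_apply hproj.aemeasurable _
    _ = m s ^ n := by simp [hμ.2 n]

theorem measure_forall_mem_eq_zero [SigmaFinite m] (hμ : IsIID m μ) {s : Set X} (hs : m s < 1) :
    μ {x | ∀ k, x k ∈ s} = 0 :=
  le_antisymm (ge_of_tendsto' (ENNReal.tendsto_pow_atTop_nhds_zero_of_lt_one hs)
    (hμ.measure_forall_mem_le_pow s)) zero_le

theorem ae_exists_mem [IsProbabilityMeasure m] (hμ : IsIID m μ) {s : Set X}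
    (hs : MeasurableSet s) (hms : 0 < m s) : ∀ᵐ x ∂μ, ∃ k, x k ∈ s := by
  have hcompl : m sᶜ < 1 := by
    rw [prob_compl_eq_one_sub hs]
    exact ENNReal.sub_lt_self ENNReal.one_ne_top one_ne_zero hms.ne'
  simpa [ae_iff] using hμ.measure_forall_mem_eq_zero hcompl

theorem ae_denseRange [TopologicalSpace X] [SecondCountableTopology X] [OpensMeasurableSpace X]
    [IsProbabilityMeasure m] (hμ : IsIID m μ) (hm : ∀ O : Set X, IsOpen O → O.Nonempty → 0 < m O) :
    ∀ᵐ x ∂μ, DenseRange x := by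
  have hbasis := isBasis_countableBasis X
  have hmeets : ∀ᵐ x ∂μ, ∀ b ∈ countableBasis X, b.Nonempty → ∃ k, x k ∈ b := by
    rw [ae_ball_iff (countable_countableBasis X)]
    intro b hb
    by_cases hne : b.Nonempty
    · filter_upwards [hμ.ae_exists_mem (hbasis.isOpen hb).measurableSet
        (hm b (hbasis.isOpen hb) hne)] with x hx using fun _ => hx
    · exact Filter.Eventually.of_forall fun _ h => absurd h hne
  filter_upwards [hmeets] with x hx
  refine hbasis.dense_iff.2 fun b hb hne => ?_
  obtain ⟨k, hk⟩ := hx b hb hne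
  exact ⟨x k, hk, k, rfl⟩

end IsIID

theorem topologically_universal_gives_extension_property_general
    {X : Type*} [TopologicalSpace X] [PolishSpace X] [MeasurableSpace X] [BorelSpace X]
    (E : Set (X × X))
    (hsym : ∀ x y : X, (x, y) ∈ E → (y, x) ∈ E)
    (huniv : ∀ U W : Finset X, Disjoint U W →
      (interior {z : X | (∀ u ∈ U, (u, z) ∈ E) ∧ ∀ w ∈ W, (w, z) ∉ E}).Nonempty)
    (m : Measure X) [IsProbabilityMeasure m]
    (hm : ∀ O : Set X, IsOpen O → O.Nonempty → 0 < m O)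
    (μ : Measure (ℕ → X)) (hμ : IsIID m μ) :
    ∀ᵐ x ∂μ, ∀ U W : Finset X,
      (↑U ⊆ Set.range x) → (↑W ⊆ Set.range x) → Disjoint U W →
      ∃ v ∈ Set.range x, (∀ u ∈ U, (v, u) ∈ E) ∧ ∀ w ∈ W, (v, w) ∉ E := by
  filter_upwards [hμ.ae_denseRange hm] with x hdense U W _ _ hUW
  obtain ⟨k, hk⟩ := hdense.exists_mem_open isOpen_interior (huniv U W hUW)
  obtain ⟨hvU, hvW⟩ := interior_subset hk
  exact ⟨x k, ⟨k, rfl⟩, fun u hu => hsym _ _ (hvU u hu), fun w hw hwv => hvW w hw (hsym _ _ hwv)⟩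

theorem topologically_universal_gives_extension_property
    {X : Type*} [TopologicalSpace X] [PolishSpace X] [MeasurableSpace X] [BorelSpace X]
    (E : Set (X × X)) (hEclosed : IsClosed E)
    (hsym : ∀ x y : X, (x, y) ∈ E → (y, x) ∈ E) (hdiag : ∀ x : X, (x, x) ∉ E)
    (huniv : ∀ U W : Finset X, Disjoint U W →
      (interior {z : X | (∀ u ∈ U, (u, z) ∈ E) ∧ ∀ w ∈ W, (w, z) ∉ E}).Nonempty)
    (m : Measure X) [IsProbabilityMeasure m]
    (hm : ∀ O : Set X, IsOpen O → O.Nonempty → 0 < m O)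
    (μ : Measure (ℕ → X)) (hμ : IsIID m μ) :
    ∀ᵐ x ∂μ, ∀ U W : Finset X,
      (↑U ⊆ Set.range x) → (↑W ⊆ Set.range x) → Disjoint U W →
      ∃ v ∈ Set.range x, (∀ u ∈ U, (v, u) ∈ E) ∧ ∀ w ∈ W, (v, w) ∉ E :=
  topologically_universal_gives_extension_property_general E hsym huniv m hm μ hμ
end

section
/- For 0 < p < 1, the Bernoulli(p) random graph on ℕ (each unordered pair of distinct vertices independently an edge with probability p) almost surely satisfies the extension property: for all disjoint finite sets U, W of vertices there exists a vertex adjacent to all of U and none of W. -/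
/-!
Fix disjoint finite sets `U` and `W` and let `v` range over the vertices above `U ∪ W`. The event
that `v` is joined to every vertex of `U` and to none of `W` depends only on the edges from `v`
to `U ∪ W`; for distinct `v` these edge sets are disjoint, so the events are independent, and
they all have the same probability `p ^ |U| * (1 - p) ^ |W| > 0`. By the second Borel–Cantelli
lemma almost surely one of them occurs. There are only countably many pairs `(U, W)`.
-/

open MeasureTheory

/-- Unordered pairs of distinct naturals, as ordered pairs (i,j) with i < j. -/
abbrev PairIdx := {q : ℕ × ℕ // q.1 < q.2}

/-- Adjacency in the random graph coded by ω : each unordered pair is an edge iff its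
Bernoulli variable equals `true`. -/
def RandAdj (ω : PairIdx → Bool) (i j : ℕ) : Prop :=
  ∃ h : min i j < max i j, ω ⟨(min i j, max i j), h⟩ = true

open ProbabilityTheory Filter Function

section Cylinder

variable {ι α : Type*} [MeasurableSpace α] [MeasurableSingletonClass α]

def HasPiMarginals (μ : Measure (ι → α)) (ν : Measure α) [SigmaFinite ν] : Prop :=
  ∀ s : Finset ι, μ.map (fun ω (i : s) => ω i) = Measure.pi fun _ => ν

theorem measurableSet_cylinder (s : Finset ι) (f : ι → α) :
    MeasurableSet {ω : ι → α | ∀ i ∈ s, ω i = f i} := by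
  simp only [Set.ofPred_forall]
  exact .biInter s.countable_toSet fun i _ => measurable_pi_apply i (measurableSet_singleton _)

variable {ν : Measure α} [SigmaFinite ν] {μ : Measure (ι → α)}

theorem HasPiMarginals.measure_cylinder (hμ : HasPiMarginals μ ν) (s : Finset ι)
    (f : ι → α) :
    μ {ω | ∀ i ∈ s, ω i = f i} = ∏ i ∈ s, ν {f i} := by
  have hpre : {ω : ι → α | ∀ i ∈ s, ω i = f i} =
      (fun ω (i : s) => ω i) ⁻¹' Set.univ.pi fun i : s => ({f i} : Set α) := by
    ext ω
    simp [Set.mem_pi]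
  have hproj : Measurable fun (ω : ι → α) (i : s) => ω i :=
    measurable_pi_lambda _ fun i => measurable_pi_apply _
  have hbox : MeasurableSet (Set.univ.pi fun i : s => ({f i} : Set α)) :=
    .univ_pi fun _ => measurableSet_singleton _
  rw [hpre, ← Measure.map_apply hproj hbox, hμ s, Measure.pi_pi,
    Finset.prod_coe_sort s fun i => ν {f i}]

theorem HasPiMarginals.iIndepSet_cylinder (hμ : HasPiMarginals μ ν) {κ : Type*}
    {S : κ → Finset ι} (hS : Pairwise (Disjoint on S)) (f : ι → α) :
    iIndepSet (fun k => {ω | ∀ i ∈ S k, ω i = f i}) μ := by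
  classical
  refine (iIndepSet_iff_meas_biInter fun k => measurableSet_cylinder _ f).2 fun F => ?_
  have hinter : (⋂ k ∈ F, {ω : ι → α | ∀ i ∈ S k, ω i = f i}) =
      {ω | ∀ i ∈ F.biUnion S, ω i = f i} := by
    ext ω
    simp only [Set.mem_iInter, Set.mem_ofPred_eq, Finset.mem_biUnion]
    grind
  simp only [hinter, hμ.measure_cylinder, Finset.prod_biUnion (hS.set_pairwise _)]

theorem HasPiMarginals.ae_frequently_cylinder (hμ : HasPiMarginals μ ν) {S : ℕ → Finset ι}
    (hS : Pairwise (Disjoint on S)) (f : ι → α) (hsum : ∑' k, ∏ i ∈ S k, ν {f i} = ⊤) :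
    ∀ᵐ ω ∂μ, ∃ᶠ k in atTop, ∀ i ∈ S k, ω i = f i := by
  have hindep := hμ.iIndepSet_cylinder hS f
  have hmeas := fun k => measurableSet_cylinder (S k) f
  have hlimsup := measure_limsup_eq_one hmeas hindep
    (by simpa only [hμ.measure_cylinder] using hsum)
  have : IsProbabilityMeasure μ := hindep.isProbabilityMeasure
  have hae : limsup (fun k => {ω : ι → α | ∀ i ∈ S k, ω i = f i}) atTop ∈ ae μ :=
    (mem_ae_iff_prob_eq_one (.measurableSet_limsup hmeas)).2 hlimsup
  exact Eventually.mono hae fun ω => mem_limsup_iff_frequently_mem.1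

end Cylinder

section ExtensionEdges

variable {U W : Finset ℕ} {v : ℕ}

def IsExtensionVertex (ω : PairIdx → Bool) (U W : Finset ℕ) (v : ℕ) : Prop :=
  v ∉ U ∧ v ∉ W ∧ (∀ u ∈ U, RandAdj ω v u) ∧ ∀ w ∈ W, ¬ RandAdj ω v w

/-- The `subtype` discards the pairs `(x, v)` with `v ≤ x`; none occur once `v` exceeds
`U ∪ W`. -/
def extensionEdges (U W : Finset ℕ) (v : ℕ) : Finset PairIdx :=
  ((U ∪ W) ×ˢ {v}).subtype fun q => q.1 < q.2

def extensionPattern (U : Finset ℕ) (q : PairIdx) : Bool :=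
  decide (q.1.1 ∈ U)

theorem mem_extensionEdges {q : PairIdx} :
    q ∈ extensionEdges U W v ↔ q.1.1 ∈ U ∪ W ∧ q.1.2 = v := by
  simp only [extensionEdges, Finset.mem_subtype, Finset.mem_product, Finset.mem_singleton]

theorem pairwise_disjoint_extensionEdges : Pairwise (Disjoint on extensionEdges U W) := by
  intro v v' hvv'
  simp only [onFun, Finset.disjoint_left, mem_extensionEdges]
  grind

theorem prod_extensionEdges {M : Type*} [CommMonoid M] (hv : ∀ x ∈ U ∪ W, x < v)
    (g : Bool → M) :
    ∏ q ∈ extensionEdges U W v, g (extensionPattern U q) =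
      ∏ x ∈ U ∪ W, g (decide (x ∈ U)) := by
  refine Finset.prod_nbij (fun q => q.1.1) (fun q hq => (mem_extensionEdges.1 hq).1) ?_ ?_
    fun _ _ => rfl
  · intro q hq q' hq' h
    have := (mem_extensionEdges.1 hq).2
    have := (mem_extensionEdges.1 hq').2
    exact Subtype.ext (Prod.ext h (by grind))
  · intro x hx
    exact ⟨⟨(x, v), hv x hx⟩, mem_extensionEdges.2 ⟨hx, rfl⟩, rfl⟩

theorem randAdj_iff_of_lt {ω : PairIdx → Bool} {u : ℕ} (h : u < v) :
    RandAdj ω v u ↔ ω ⟨(u, v), h⟩ = true := by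
  simp only [RandAdj, min_eq_right h.le, max_eq_left h.le]
  exact ⟨fun ⟨_, h'⟩ => h', fun h' => ⟨h, h'⟩⟩

theorem isExtensionVertex_of_eq_extensionPattern {ω : PairIdx → Bool} (hUW : Disjoint U W)
    (hv : ∀ x ∈ U ∪ W, x < v)
    (hω : ∀ q ∈ extensionEdges U W v, ω q = extensionPattern U q) :
    IsExtensionVertex ω U W v := by
  have hω' : ∀ x (hx : x ∈ U ∪ W), ω ⟨(x, v), hv x hx⟩ = decide (x ∈ U) := fun x hx =>
    hω _ (mem_extensionEdges.2 ⟨hx, rfl⟩)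
  refine ⟨fun h => (hv v (by simp [h])).false, fun h => (hv v (by simp [h])).false,
    fun u hu => ?_, fun w hw => ?_⟩
  · rw [randAdj_iff_of_lt (hv u (by simp [hu])), hω' u (Finset.mem_union_left W hu),
      decide_eq_true hu]
  · rw [randAdj_iff_of_lt (hv w (by simp [hw])), hω' w (Finset.mem_union_right U hw),
      decide_eq_false (Finset.disjoint_right.1 hUW hw)]
    simp

end ExtensionEdges

theorem HasPiMarginals.ae_exists_isExtensionVertex {ν : Measure Bool} [SigmaFinite ν]
    {μ : Measure (PairIdx → Bool)} (hμ : HasPiMarginals μ ν) (hν : ∀ b, ν {b} ≠ 0)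
    {U W : Finset ℕ} (hUW : Disjoint U W) :
    ∀ᵐ ω ∂μ, ∃ v, IsExtensionVertex ω U W v := by
  set N := (U ∪ W).sup id + 1
  have hN : ∀ k, ∀ x ∈ U ∪ W, x < N + k := fun k x hx =>
    Nat.lt_add_right k (Nat.lt_succ_of_le (Finset.le_sup (f := id) hx))
  have hsum : ∑' k, ∏ q ∈ extensionEdges U W (N + k), ν {extensionPattern U q} = ⊤ := by
    simp_rw [prod_extensionEdges (hN _) fun b => ν {b}]
    exact ENNReal.tsum_const_eq_top_of_ne_zero (Finset.prod_ne_zero_iff.2 fun _ _ => hν _)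
  filter_upwards [hμ.ae_frequently_cylinder
    (pairwise_disjoint_extensionEdges.comp_of_injective (add_right_injective N)) _ hsum] with ω hω
  obtain ⟨k, hk⟩ := hω.exists
  exact ⟨N + k, isExtensionVertex_of_eq_extensionPattern hUW (hN k) hk⟩

theorem PMF.bernoulli_toMeasure_singleton_ne_zero {q : NNReal} (h : q ≤ 1) (hq0 : q ≠ 0)
    (hq1 : q ≠ 1) (b : Bool) : (PMF.bernoulli q h).toMeasure {b} ≠ 0 := by
  rw [PMF.toMeasure_apply_singleton _ _ (measurableSet_singleton _), PMF.bernoulli_apply]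
  cases b <;> simp [ENNReal.coe_sub, hq0, tsub_eq_zero_iff_le, ENNReal.one_le_coe_iff,
    (h.lt_of_ne hq1).not_ge]

theorem bernoulli_random_graph_ae_extension_property
    (p : ENNReal) (hp0 : 0 < p) (hp1 : p < 1)
    (μ : Measure (PairIdx → Bool))
    (hμ : ∀ s : Finset PairIdx,
      Measure.map (fun (ω : PairIdx → Bool) (i : {q // q ∈ s}) => ω ↑i) μ =
        Measure.pi (fun _ : {q // q ∈ s} => (PMF.bernoulli p.toNNReal (by simpa using ENNReal.toNNReal_mono ENNReal.one_ne_top hp1.le)).toMeasure)) :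
    ∀ᵐ ω ∂μ, ∀ U W : Finset ℕ, Disjoint U W →
      ∃ v : ℕ, v ∉ U ∧ v ∉ W ∧ (∀ u ∈ U, RandAdj ω v u) ∧ (∀ w ∈ W, ¬ RandAdj ω v w) := by
  have hq0 : p.toNNReal ≠ 0 :=
    ENNReal.toNNReal_ne_zero.2 ⟨hp0.ne', (hp1.trans ENNReal.one_lt_top).ne⟩
  have hq1 : p.toNNReal ≠ 1 := ENNReal.toNNReal_ne_one.2 hp1.ne
  refine ae_all_iff.2 fun U => ae_all_iff.2 fun W => ?_
  by_cases hUW : Disjoint U W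
  · exact (HasPiMarginals.ae_exists_isExtensionVertex hμ
      (PMF.bernoulli_toMeasure_singleton_ne_zero _ hq0 hq1) hUW).mono fun _ h _ => h
  · exact ae_of_all _ fun _ h => absurd h hUW
end

section
/- Let G be a shift-invariant graph on an abelian group A with edge relation x ~ y iff x − y ∈ Z, where Z = −Z and 0 ∉ Z. If G satisfies the K₄-free extension property (for all disjoint finite sets U, W with U inducing a triangle-free graph, some vertex is adjacent to all of U and none of W), then G contains a 4-clique; hence no shift-invariant universal K₄-free graph exists on an abelian group. -/
/-!
Take `z ∈ Z`, then (extension over `U = {0}`, `W = {z, -z}`) some `v ∈ Z` with `v ± z ∉ Z`.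
The square `{0, -v, -z, -v - z}` is then an induced 4-cycle, so it is triangle-free and has a
common neighbour `w`. This gives `v, w, z, v + w, w + z, v + w + z ∈ Z`, i.e. the four points
`0, v, v + w, v + w + z` are pairwise adjacent.
-/

section CayleyGraph

variable {A : Type*} [AddCommGroup A] {Z : Set A}

def IsTriangleFree (Z : Set A) (U : Finset A) : Prop :=
  ¬ ∃ a ∈ U, ∃ b ∈ U, ∃ c ∈ U, a - b ∈ Z ∧ a - c ∈ Z ∧ b - c ∈ Z

def HasExtensionProperty (Z : Set A) : Prop :=
  ∀ U W : Finset A, Disjoint U W → IsTriangleFree Z U →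
    ∃ v : A, v ∉ U ∧ v ∉ W ∧ (∀ u ∈ U, v - u ∈ Z) ∧ (∀ w ∈ W, v - w ∉ Z)

lemma ne_of_sub_mem (h0 : (0 : A) ∉ Z) {x y : A} (h : x - y ∈ Z) : x ≠ y := by
  rintro rfl
  exact h0 (by simpa using h)

lemma isTriangleFree_singleton (h0 : (0 : A) ∉ Z) (a : A) : IsTriangleFree Z {a} := by
  rintro ⟨x, hx, y, hy, -, -, hxy, -, -⟩
  rw [Finset.mem_singleton] at hx hy
  exact ne_of_sub_mem h0 hxy (hx.trans hy.symm)

lemma sub_notMem_of_mem_pair [DecidableEq A] (hsym : ∀ z ∈ Z, -z ∈ Z) (h0 : (0 : A) ∉ Z) {a d : A}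
    (had : a - d ∉ Z) {x y : A} (hx : x ∈ ({a, d} : Finset A)) (hy : y ∈ ({a, d} : Finset A)) :
    x - y ∉ Z := by
  have hda : d - a ∉ Z := fun h => had (by simpa using hsym _ h)
  simp only [Finset.mem_insert, Finset.mem_singleton] at hx hy
  rcases hx with rfl | rfl <;> rcases hy with rfl | rfl <;> simpa

-- Of any three points of `{a, b, c, d}`, two lie in the same non-edge `{a, d}` or `{b, c}`.
lemma isTriangleFree_of_sub_notMem [DecidableEq A] (hsym : ∀ z ∈ Z, -z ∈ Z) (h0 : (0 : A) ∉ Z)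
    {a b c d : A} (had : a - d ∉ Z) (hbc : b - c ∉ Z) : IsTriangleFree Z {a, b, c, d} := by
  have hpart : ∀ x ∈ ({a, b, c, d} : Finset A),
      x ∈ ({a, d} : Finset A) ∨ x ∈ ({b, c} : Finset A) := by
    intro x hx
    simp only [Finset.mem_insert, Finset.mem_singleton] at hx ⊢
    tauto
  have hP {x y : A} : x ∈ ({a, d} : Finset A) → y ∈ ({a, d} : Finset A) → x - y ∉ Z :=
    sub_notMem_of_mem_pair hsym h0 had
  have hQ {x y : A} : x ∈ ({b, c} : Finset A) → y ∈ ({b, c} : Finset A) → x - y ∉ Z :=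
    sub_notMem_of_mem_pair hsym h0 hbc
  rintro ⟨x, hx, y, hy, w, hw, hxy, hxw, hyw⟩
  rcases hpart x hx with hx | hx <;> rcases hpart y hy with hy | hy <;>
    rcases hpart w hw with hw | hw
  all_goals first
    | exact hP hx hy hxy | exact hP hx hw hxw | exact hP hy hw hyw
    | exact hQ hx hy hxy | exact hQ hx hw hxw | exact hQ hy hw hyw

lemma isTriangleFree_square [DecidableEq A] (hsym : ∀ z ∈ Z, -z ∈ Z) (h0 : (0 : A) ∉ Z) {v z : A}
    (hvz : v - z ∉ Z) (hvz' : v + z ∉ Z) : IsTriangleFree Z {0, -v, -z, -v - z} := by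
  refine isTriangleFree_of_sub_notMem hsym h0 ?_ ?_
  · simpa [add_comm] using hvz'
  · intro h
    exact hvz (by simpa [sub_eq_add_neg, add_comm] using hsym _ h)

lemma exists_four_clique_of_sums_mem {v w z : A} (h0 : (0 : A) ∉ Z) (hv : v ∈ Z) (hw : w ∈ Z)
    (hz : z ∈ Z) (hvw : v + w ∈ Z) (hwz : w + z ∈ Z) (hvwz : v + w + z ∈ Z) :
    ∃ a b c d : A, a ≠ b ∧ a ≠ c ∧ a ≠ d ∧ b ≠ c ∧ b ≠ d ∧ c ≠ d ∧
      a - b ∈ Z ∧ a - c ∈ Z ∧ a - d ∈ Z ∧ b - c ∈ Z ∧ b - d ∈ Z ∧ c - d ∈ Z := by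
  have hab : v + w + z - (v + w) ∈ Z := by rwa [add_sub_cancel_left]
  have hac : v + w + z - v ∈ Z := by rwa [add_assoc, add_sub_cancel_left]
  have had : v + w + z - 0 ∈ Z := by rwa [sub_zero]
  have hbc : v + w - v ∈ Z := by rwa [add_sub_cancel_left]
  have hbd : v + w - 0 ∈ Z := by rwa [sub_zero]
  have hcd : v - 0 ∈ Z := by rwa [sub_zero]
  exact ⟨v + w + z, v + w, v, 0, ne_of_sub_mem h0 hab, ne_of_sub_mem h0 hac,
    ne_of_sub_mem h0 had, ne_of_sub_mem h0 hbc, ne_of_sub_mem h0 hbd, ne_of_sub_mem h0 hcd,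
    hab, hac, had, hbc, hbd, hcd⟩

namespace HasExtensionProperty

lemma exists_mem_forall_sub_notMem (hext : HasExtensionProperty Z) (h0 : (0 : A) ∉ Z)
    (W : Finset A) (hW : (0 : A) ∉ W) : ∃ v ∈ Z, ∀ w ∈ W, v - w ∉ Z := by
  obtain ⟨v, -, -, hvU, hvW⟩ :=
    hext {0} W (Finset.disjoint_singleton_left.2 hW) (isTriangleFree_singleton h0 0)
  exact ⟨v, by simpa using hvU 0 (Finset.mem_singleton_self 0), hvW⟩

lemma exists_forall_sub_mem (hext : HasExtensionProperty Z) {U : Finset A}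
    (hU : IsTriangleFree Z U) : ∃ w, ∀ u ∈ U, w - u ∈ Z := by
  obtain ⟨w, -, -, hw, -⟩ := hext U ∅ (Finset.disjoint_empty_right U) hU
  exact ⟨w, hw⟩

end HasExtensionProperty

end CayleyGraph

theorem abelian_extension_property_gives_four_clique
    {A : Type*} [AddCommGroup A] (Z : Set A)
    (hsym : ∀ z ∈ Z, -z ∈ Z) (h0 : (0 : A) ∉ Z)
    (hext : ∀ U W : Finset A, Disjoint U W →
      (¬ ∃ a ∈ U, ∃ b ∈ U, ∃ c ∈ U, a - b ∈ Z ∧ a - c ∈ Z ∧ b - c ∈ Z) →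
      ∃ v : A, v ∉ U ∧ v ∉ W ∧ (∀ u ∈ U, v - u ∈ Z) ∧ (∀ w ∈ W, v - w ∉ Z)) :
    ∃ a b c d : A, a ≠ b ∧ a ≠ c ∧ a ≠ d ∧ b ≠ c ∧ b ≠ d ∧ c ≠ d ∧
      a - b ∈ Z ∧ a - c ∈ Z ∧ a - d ∈ Z ∧ b - c ∈ Z ∧ b - d ∈ Z ∧ c - d ∈ Z := by
  classical
  have hext' : HasExtensionProperty Z := hext
  obtain ⟨z, hz, -⟩ := hext'.exists_mem_forall_sub_notMem h0 ∅ (Finset.notMem_empty 0)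
  have hz0 : z ≠ 0 := fun h => h0 (h ▸ hz)
  obtain ⟨v, hv, hvW⟩ := hext'.exists_mem_forall_sub_notMem h0 {z, -z} (by simp [eq_comm, hz0])
  have hvz : v - z ∉ Z := hvW z (by simp)
  have hvz' : v + z ∉ Z := by simpa using hvW (-z) (by simp)
  obtain ⟨w, hw⟩ := hext'.exists_forall_sub_mem (isTriangleFree_square hsym h0 hvz hvz')
  have hw0 : w ∈ Z := by simpa using hw 0 (by simp)
  have hwv : v + w ∈ Z := by simpa [add_comm] using hw (-v) (by simp)
  have hwz : w + z ∈ Z := by simpa using hw (-z) (by simp)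
  have hvwz : v + w + z ∈ Z := by
    simpa [sub_eq_add_neg, add_comm, add_left_comm] using hw (-v - z) (by simp)
  exact exists_four_clique_of_sums_mem h0 hv hw0 hz hwv hwz hvwz
end

section
/- Let (X, E) be a topologically universal K_s-free graph on a Polish space X (s ≥ 3): X contains no s points pairwise joined by E, and for all disjoint finite sets {x₁,…,x_k}, {y₁,…,y_t} with the induced graph on {x₁,…,x_k} being K_{s−1}-free, the set ⋂ᵢ E_{xᵢ} ∩ ⋂ⱼ (X \ E_{yⱼ}) has nonempty interior. Then for every nondegenerate Borel probability measure m on X, for m^∞-almost every i.i.d. sequence (x_k), the induced countable graph on {x_k} is K_s-free and satisfies the K_s-free extension property. -/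
/-!
Fix a finite configuration `U`, `W` among the samples. By universality the set of points adjacent
to all of `U` and to none of `W` has nonempty interior, hence some `m`-measure `ε > 0`. This set is
determined by the first `N` samples, and the later samples are independent of them, so the
probability that `n` further samples all miss it is at most `(1 - ε) ^ n → 0`. Ranging over the
countably many `N`, index sets `A, B ⊆ Fin N` and thresholds `ε = 1 / j` gives the almost sure
statement.
-/

open MeasureTheory

open Set ENNReal

section

variable {X : Type*}

theorem exists_subset_range_fin {x : ℕ → X} {s : Finset X} (hs : (s : Set X) ⊆ range x) :
    ∃ N, (s : Set X) ⊆ range fun i : Fin N => x i := by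
  have hmono : Monotone fun N => range fun i : Fin N => x i := by
    rintro N M hNM _ ⟨i, rfl⟩
    exact ⟨Fin.castLE hNM i, rfl⟩
  refine hmono.directed_le.exists_mem_subset_of_finset_subset_biUnion (hs.trans ?_)
  rintro _ ⟨k, rfl⟩
  exact mem_iUnion.2 ⟨k + 1, ⟨k, k.lt_succ_self⟩, rfl⟩

def extensionSet (E : Set (X × X)) (U W : Set X) : Set X :=
  {z | (∀ u ∈ U, (u, z) ∈ E) ∧ ∀ w ∈ W, (w, z) ∉ E}

variable [MeasurableSpace X]

theorem measurableSet_setOf_mem_extensionSet_image {N : ℕ} {E : Set (X × X)}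
    (hE : MeasurableSet E) (A B : Set (Fin N)) :
    MeasurableSet {p : (Fin N → X) × X | p.2 ∈ extensionSet E (p.1 '' A) (p.1 '' B)} := by
  simp only [extensionSet, mem_ofPred_eq, forall_mem_image]
  measurability

theorem prod_pi_measure_forall_notMem_le {Y : Type*} [MeasurableSpace Y]
    (ν : Measure Y) [IsProbabilityMeasure ν] (m : Measure X) [IsProbabilityMeasure m]
    {T : Set (Y × X)} (hT : MeasurableSet T) (ε : ℝ≥0∞) (n : ℕ) :
    (ν.prod (Measure.pi fun _ : Fin n => m))
      {p | ε ≤ m (Prod.mk p.1 ⁻¹' T) ∧ ∀ k, (p.1, p.2 k) ∉ T} ≤ (1 - ε) ^ n := by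
  have hD : MeasurableSet
      {p : Y × (Fin n → X) | ε ≤ m (Prod.mk p.1 ⁻¹' T) ∧ ∀ k, (p.1, p.2 k) ∉ T} :=
    (measurableSet_le measurable_const
      ((measurable_measure_prodMk_left hT).comp measurable_fst)).inter <|
      measurableSet_setOfPred.2 <| .forall fun k => (hT.mem.comp (by fun_prop)).not
  rw [Measure.prod_apply hD]
  calc _ ≤ ∫⁻ _, (1 - ε) ^ n ∂ν := lintegral_mono fun u => ?_
    _ = (1 - ε) ^ n := by simp
  by_cases h : ε ≤ m (Prod.mk u ⁻¹' T)
  · calc _ ≤ Measure.pi (fun _ : Fin n => m) (univ.pi fun _ => (Prod.mk u ⁻¹' T)ᶜ) :=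
          measure_mono fun v hv k _ => hv.2 k
      _ = (1 - m (Prod.mk u ⁻¹' T)) ^ n := by
          simp [Measure.pi_pi, prob_compl_eq_one_sub (measurable_prodMk_left hT)]
      _ ≤ (1 - ε) ^ n := by gcongr
  · simp [h]

namespace IsIID

variable {m : Measure X} {μ : Measure (ℕ → X)}

theorem measurePreserving_restrict (hμ : IsIID m μ) (n : ℕ) :
    MeasurePreserving (fun x (i : Fin n) => x i) μ (Measure.pi fun _ => m) :=
  ⟨by fun_prop, hμ.2 n⟩

theorem measurePreserving_prod_blocks [SigmaFinite m] (hμ : IsIID m μ) (N n : ℕ) :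
    MeasurePreserving (fun x => ((fun i : Fin N => x i), fun k : Fin n => x (N + k))) μ
      ((Measure.pi fun _ : Fin N => m).prod (Measure.pi fun _ : Fin n => m)) := by
  have e := (measurePreserving_sumPiEquivProdPi (fun _ : Fin N ⊕ Fin n => m)).comp
    (measurePreserving_piCongrLeft (fun _ : Fin (N + n) => m) finSumFinEquiv).symm
  convert e.comp (hμ.measurePreserving_restrict (N + n)) using 1
  funext x
  ext i <;> rfl

variable [IsProbabilityMeasure m]

theorem measure_forall_notMem_eq_zero (hμ : IsIID m μ) {N : ℕ} {T : Set ((Fin N → X) × X)}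
    (hT : MeasurableSet T) {ε : ℝ≥0∞} (hε : 0 < ε) :
    μ {x | ε ≤ m (Prod.mk (fun i : Fin N => x i) ⁻¹' T) ∧
      ∀ k, ((fun i : Fin N => x i), x k) ∉ T} = 0 := by
  refine le_antisymm (ge_of_tendsto' (ENNReal.tendsto_pow_atTop_nhds_zero_of_lt_one
    (ENNReal.sub_lt_self one_ne_top one_ne_zero hε.ne')) fun n => ?_) bot_le
  have hsplit := hμ.measurePreserving_prod_blocks N n
  let D := {p : (Fin N → X) × (Fin n → X) |
    ε ≤ m (Prod.mk p.1 ⁻¹' T) ∧ ∀ k, (p.1, p.2 k) ∉ T}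
  calc _ ≤ μ (_ ⁻¹' D) := measure_mono fun x hx => ⟨hx.1, fun k => hx.2 _⟩
    _ ≤ _ := Measure.le_map_apply hsplit.measurable.aemeasurable D
    _ ≤ (1 - ε) ^ n := hsplit.map_eq ▸ prod_pi_measure_forall_notMem_le _ _ hT ε n

theorem ae_exists_mem_of_measure_pos (hμ : IsIID m μ) {N : ℕ} {T : Set ((Fin N → X) × X)}
    (hT : MeasurableSet T) :
    ∀ᵐ x ∂μ, 0 < m (Prod.mk (fun i : Fin N => x i) ⁻¹' T) →
      ∃ k, ((fun i : Fin N => x i), x k) ∈ T := by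
  have hnull (j : ℕ) := measure_eq_zero_iff_ae_notMem.1
    (hμ.measure_forall_notMem_eq_zero hT (ENNReal.inv_pos.2 (natCast_ne_top j)))
  filter_upwards [ae_all_iff.2 hnull] with x hx hpos
  obtain ⟨j, hj⟩ := ENNReal.exists_inv_nat_lt hpos.ne'
  by_contra! hmiss
  exact hx j ⟨hj.le, hmiss⟩

theorem ae_exists_mem_extensionSet (hμ : IsIID m μ) {E : Set (X × X)} (hE : MeasurableSet E) :
    ∀ᵐ x ∂μ, ∀ U W : Finset X, ↑U ⊆ range x → ↑W ⊆ range x →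
      0 < m (extensionSet E U W) → ∃ k, x k ∈ extensionSet E U W := by
  have hfin : ∀ᵐ x ∂μ, ∀ N (A B : Set (Fin N)),
      let S := extensionSet E ((fun i : Fin N => x i) '' A) ((fun i : Fin N => x i) '' B)
      0 < m S → ∃ k, x k ∈ S := by
    simp only [ae_all_iff]
    exact fun N A B =>
      hμ.ae_exists_mem_of_measure_pos (measurableSet_setOf_mem_extensionSet_image hE A B)
  classical
  filter_upwards [hfin] with x hx U W hU hW
  obtain ⟨N, hN⟩ := exists_subset_range_fin (s := U ∪ W) (by simpa using union_subset hU hW)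
  rw [Finset.coe_union, union_subset_iff] at hN
  simpa only [image_preimage_eq_of_subset hN.1, image_preimage_eq_of_subset hN.2] using
    hx N ((fun i : Fin N => x i) ⁻¹' U) ((fun i : Fin N => x i) ⁻¹' W)

end IsIID

end

theorem topologically_universal_ks_free_gives_random_ks_free_general
    {X : Type*} [TopologicalSpace X] [PolishSpace X] [MeasurableSpace X] [BorelSpace X]
    (s : ℕ)
    (E : Set (X × X)) (hEclosed : IsClosed E)
    (hsym : ∀ x y : X, (x, y) ∈ E → (y, x) ∈ E)
    (hfree : ¬ ∃ f : Fin s → X, ∀ i j, i ≠ j → (f i, f j) ∈ E)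
    (huniv : ∀ U W : Finset X, Disjoint U W →
      (¬ ∃ f : Fin (s - 1) → X, Function.Injective f ∧ (∀ i, f i ∈ U) ∧
        ∀ i j, i ≠ j → (f i, f j) ∈ E) →
      (interior {z : X | (∀ u ∈ U, (u, z) ∈ E) ∧ ∀ w ∈ W, (w, z) ∉ E}).Nonempty)
    (m : Measure X) [IsProbabilityMeasure m]
    (hm : ∀ O : Set X, IsOpen O → O.Nonempty → 0 < m O)
    (μ : Measure (ℕ → X)) (hμ : IsIID m μ) :
    ∀ᵐ x ∂μ,
      (¬ ∃ g : Fin s → ℕ, ∀ i j, i ≠ j → (x (g i), x (g j)) ∈ E) ∧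
      ∀ U W : Finset X, (↑U ⊆ Set.range x) → (↑W ⊆ Set.range x) → Disjoint U W →
        (¬ ∃ f : Fin (s - 1) → X, Function.Injective f ∧ (∀ i, f i ∈ U) ∧
          ∀ i j, i ≠ j → (f i, f j) ∈ E) →
        ∃ v ∈ Set.range x, (∀ u ∈ U, (v, u) ∈ E) ∧ ∀ w ∈ W, (v, w) ∉ E := by
  filter_upwards [hμ.ae_exists_mem_extensionSet hEclosed.measurableSet] with x hx
  refine ⟨fun ⟨g, hg⟩ => hfree ⟨x ∘ g, hg⟩, fun U W hU hW hUW hUfree => ?_⟩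
  have hpos : 0 < m (extensionSet E U W) :=
    (hm _ isOpen_interior (huniv U W hUW hUfree)).trans_le (measure_mono interior_subset)
  obtain ⟨k, hkU, hkW⟩ := hx U W hU hW hpos
  exact ⟨x k, mem_range_self k, fun u hu => hsym _ _ (hkU u hu),
    fun w hw hwk => hkW w hw (hsym _ _ hwk)⟩

theorem topologically_universal_ks_free_gives_random_ks_free
    {X : Type*} [TopologicalSpace X] [PolishSpace X] [MeasurableSpace X] [BorelSpace X]
    (s : ℕ) (hs : 3 ≤ s)
    (E : Set (X × X)) (hEclosed : IsClosed E)
    (hsym : ∀ x y : X, (x, y) ∈ E → (y, x) ∈ E) (hdiag : ∀ x : X, (x, x) ∉ E)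
    (hfree : ¬ ∃ f : Fin s → X, ∀ i j, i ≠ j → (f i, f j) ∈ E)
    (huniv : ∀ U W : Finset X, Disjoint U W →
      (¬ ∃ f : Fin (s - 1) → X, Function.Injective f ∧ (∀ i, f i ∈ U) ∧
        ∀ i j, i ≠ j → (f i, f j) ∈ E) →
      (interior {z : X | (∀ u ∈ U, (u, z) ∈ E) ∧ ∀ w ∈ W, (w, z) ∉ E}).Nonempty)
    (m : Measure X) [IsProbabilityMeasure m]
    (hm : ∀ O : Set X, IsOpen O → O.Nonempty → 0 < m O)
    (μ : Measure (ℕ → X)) (hμ : IsIID m μ) :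
    ∀ᵐ x ∂μ,
      (¬ ∃ g : Fin s → ℕ, ∀ i j, i ≠ j → (x (g i), x (g j)) ∈ E) ∧
      ∀ U W : Finset X, (↑U ⊆ Set.range x) → (↑W ⊆ Set.range x) → Disjoint U W →
        (¬ ∃ f : Fin (s - 1) → X, Function.Injective f ∧ (∀ i, f i ∈ U) ∧
          ∀ i j, i ≠ j → (f i, f j) ∈ E) →
        ∃ v ∈ Set.range x, (∀ u ∈ U, (v, u) ∈ E) ∧ ∀ w ∈ W, (v, w) ∉ E :=
  topologically_universal_ks_free_gives_random_ks_free_general s E hEclosed hsym hfree huniv m hm μ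
    hμ
end

section
/- There exists a symmetric closed subset E ⊆ ℝ × ℝ with nonempty interior, disjoint from the diagonal, such that (ℝ, E) is a topologically universal K_s-free graph for given s > 3: no s points of ℝ are pairwise joined by E, and for every pair of disjoint finite sets U, W ⊂ ℝ with the induced graph on U being K_{s−1}-free, the set of points joined to all of U and to none of W has nonempty interior. -/
/-!
Enumerate all requirements `(A, q)`, where `A` is a finite set of rational intervals and `q ∈ ℕ`.
Stage `r` reserves a fresh interval `F_r` to the right of every number mentioned by stages `≤ r`
and, if the graph built so far has no `K_k` (`k = s - 1`) inside `⋃ A`, joins all of `⋃ A` to all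
of `F_r`. The largest vertex of a clique lies in some `F_r`, all other vertices lie in the `⋃ A` of
stage `r` and were joined at earlier stages, so a `K_{k+1}` would be a `K_k` forbidden at stage `r`.
Given `U` and `W`, compactness thickens the `K_k`-free set `U` to a `K_k`-free neighbourhood; cover
`U` by rational intervals inside it and away from `W`, take `q > max W`, and the interior of the
fresh interval of that requirement consists of common neighbours of `U` that miss `W`. The fresh
intervals escape to infinity, so the union of the closed squares is locally finite, hence closed.
-/

open Set Metric

section CliqueFree

variable {X : Type*} {k : ℕ} {E : Set (X × X)} {S : Set X}

def RelCliqueFreeOn (k : ℕ) (E : Set (X × X)) (S : Set X) : Prop :=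
  ¬ ∃ f : Fin k → X, (∀ i, f i ∈ S) ∧ ∀ i j, i ≠ j → (f i, f j) ∈ E

lemma RelCliqueFreeOn.mono {E' : Set (X × X)} {S' : Set X} (h : RelCliqueFreeOn k E' S')
    (hE : E ⊆ E') (hS : S ⊆ S') : RelCliqueFreeOn k E S :=
  fun ⟨f, hfS, hfE⟩ => h ⟨f, fun i => hS (hfS i), fun i j hij => hE (hfE i j hij)⟩

lemma RelCliqueFreeOn.of_le {k' : ℕ} (h : RelCliqueFreeOn k E S) (hk : k ≤ k') :
    RelCliqueFreeOn k' E S :=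
  fun ⟨f, hfS, hfE⟩ =>
    h ⟨f ∘ Fin.castLE hk, fun _ => hfS _, fun _ _ hij => hfE _ _ ((Fin.castLE_injective hk).ne hij)⟩

lemma relCliqueFreeOn_iff_of_irrefl (hE : ∀ x, (x, x) ∉ E) :
    RelCliqueFreeOn k E S ↔ ¬ ∃ f : Fin k → X, Function.Injective f ∧ (∀ i, f i ∈ S) ∧
      ∀ i j, i ≠ j → (f i, f j) ∈ E := by
  refine not_congr ⟨fun ⟨f, hfS, hfE⟩ => ⟨f, fun i j hfij => ?_, hfS, hfE⟩,
    fun ⟨f, _, hfS, hfE⟩ => ⟨f, hfS, hfE⟩⟩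
  by_contra hij
  exact hE (f j) (hfij ▸ hfE i j hij)

lemma RelCliqueFreeOn.exists_thickening [PseudoMetricSpace X] (h : RelCliqueFreeOn k E S)
    (hE : IsClosed E) (hS : IsCompact S) : ∃ δ > 0, RelCliqueFreeOn k E (thickening δ S) := by
  set cliques : Set (Fin k → X) := {f | ∀ i j, i ≠ j → (f i, f j) ∈ E}
  have hcliques : IsClosed cliques := by
    simp only [cliques, ofPred_forall]
    exact isClosed_iInter fun i => isClosed_iInter fun j => isClosed_iInter fun _ =>
      hE.preimage ((continuous_apply i).prodMk (continuous_apply j))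
  have hdisj : Disjoint (univ.pi fun _ => S) cliques :=
    disjoint_left.2 fun f hfS hfE => h ⟨f, fun i => hfS i (mem_univ i), hfE⟩
  obtain ⟨δ, hδ, hδdisj⟩ := hdisj.exists_thickenings (isCompact_univ_pi fun _ => hS) hcliques
  refine ⟨δ, hδ, fun ⟨f, hfS, hfE⟩ => ?_⟩
  choose u hu hfu using fun i => mem_thickening_iff.1 (hfS i)
  have hf : f ∈ thickening δ (univ.pi fun _ => S) :=
    mem_thickening_iff.2 ⟨u, fun i _ => hu i, (dist_pi_lt_iff hδ).2 hfu⟩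
  exact disjoint_left.1 hδdisj hf (self_subset_thickening hδ _ hfE)

end CliqueFree

lemma locallyFinite_of_subset_natCast_le {X : Type*} [TopologicalSpace X] {φ : X → ℝ}
    (hφ : Continuous φ) {f : ℕ → Set X} (hf : ∀ r, f r ⊆ {x | (r : ℝ) ≤ φ x}) :
    LocallyFinite f := by
  intro x
  refine ⟨φ ⁻¹' Iio (φ x + 1), (isOpen_Iio.preimage hφ).mem_nhds (lt_add_one (φ x)), ?_⟩
  refine (finite_Iio ⌈φ x + 1⌉₊).subset fun r ⟨y, hyr, hy⟩ => ?_
  exact Nat.lt_ceil.2 ((hf r hyr).trans_lt hy)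

def ratIccUnion (A : Finset (ℚ × ℚ)) : Set ℝ := ⋃ p ∈ A, Icc (p.1 : ℝ) p.2

lemma isClosed_ratIccUnion (A : Finset (ℚ × ℚ)) : IsClosed (ratIccUnion A) :=
  isClosed_biUnion_finset fun _ _ => isClosed_Icc

lemma abs_le_of_mem_ratIccUnion {A : Finset (ℚ × ℚ)} {x : ℝ} (hx : x ∈ ratIccUnion A) :
    |x| ≤ ∑ p ∈ A, (|(p.1 : ℝ)| + |(p.2 : ℝ)|) := by
  obtain ⟨p, hp, hxp⟩ := mem_iUnion₂.1 hx
  calc |x| ≤ max |(p.1 : ℝ)| |(p.2 : ℝ)| := abs_le_max_abs_abs hxp.1 hxp.2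
    _ ≤ |(p.1 : ℝ)| + |(p.2 : ℝ)| := max_le_add_of_nonneg (abs_nonneg _) (abs_nonneg _)
    _ ≤ _ := Finset.single_le_sum (f := fun p : ℚ × ℚ => |(p.1 : ℝ)| + |(p.2 : ℝ)|)
        (fun _ _ => by positivity) hp

lemma exists_ratIccUnion_between {O : Set ℝ} (hO : IsOpen O) (U : Finset ℝ) (hU : ↑U ⊆ O) :
    ∃ A : Finset (ℚ × ℚ), ↑U ⊆ ratIccUnion A ∧ ratIccUnion A ⊆ O := by
  have hP : ∀ u, ∃ p : ℚ × ℚ, u ∈ O → u ∈ Icc (p.1 : ℝ) p.2 ∧ Icc (p.1 : ℝ) p.2 ⊆ O := by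
    intro u
    by_cases hu : u ∈ O
    · obtain ⟨ε, hε, hball⟩ := Metric.isOpen_iff.1 hO u hu
      obtain ⟨a, ha⟩ := exists_rat_btwn (sub_lt_self u hε)
      obtain ⟨b, hb⟩ := exists_rat_btwn (lt_add_of_pos_right u hε)
      refine ⟨(a, b), fun _ => ⟨⟨ha.2.le, hb.1.le⟩, ?_⟩⟩
      exact (Icc_subset_Ioo ha.1 hb.2).trans (Real.ball_eq_Ioo u ε ▸ hball)
    · exact ⟨0, fun h => absurd h hu⟩
  choose P hP using hP
  refine ⟨U.image P, fun u hu => mem_biUnion (Finset.mem_image_of_mem P hu) (hP u (hU hu)).1, ?_⟩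
  simp only [ratIccUnion, iUnion_subset_iff, Finset.mem_image]
  rintro _ ⟨u, hu, rfl⟩
  exact (hP u (hU hu)).2

namespace UniversalGraph

abbrev Requirement := Finset (ℚ × ℚ) × ℕ

def size (R : Requirement) : ℝ := R.2 + ∑ p ∈ R.1, (|(p.1 : ℝ)| + |(p.2 : ℝ)|)

lemma size_nonneg (R : Requirement) : 0 ≤ size R := by
  unfold size; positivity

lemma snd_le_size (R : Requirement) : (R.2 : ℝ) ≤ size R :=
  le_add_of_nonneg_right (Finset.sum_nonneg fun _ _ => by positivity)

variable (k : ℕ) (req : ℕ → Requirement)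

def bound (r : ℕ) : ℝ := ∑ i ∈ Finset.range (r + 1), size (req i)

def start (r : ℕ) : ℝ := r + bound req r + 2

def fresh (r : ℕ) : Set ℝ := Icc (start req r) (start req r + 1 / 2)

def reqSet (r : ℕ) : Set ℝ := ratIccUnion (req r).1

def link (r : ℕ) : Set (ℝ × ℝ) := reqSet req r ×ˢ fresh req r ∪ fresh req r ×ˢ reqSet req r

variable {k req}

lemma bound_nonneg (r : ℕ) : 0 ≤ bound req r :=
  Finset.sum_nonneg fun _ _ => size_nonneg _

lemma bound_mono : Monotone (bound req) := fun _ _ h =>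
  Finset.sum_le_sum_of_subset_of_nonneg (Finset.range_subset_range.2 (by omega))
    fun _ _ _ => size_nonneg _

lemma size_le_bound {i r : ℕ} (h : i ≤ r) : size (req i) ≤ bound req r :=
  Finset.single_le_sum (f := fun j => size (req j)) (fun _ _ => size_nonneg _)
    (Finset.mem_range.2 (by omega))

lemma natCast_add_two_le_start (r : ℕ) : (r : ℝ) + 2 ≤ start req r := by
  unfold start; linarith [bound_nonneg (req := req) r]

lemma bound_lt_start (r : ℕ) : bound req r < start req r := by
  unfold start; linarith [Nat.cast_nonneg (α := ℝ) r]

lemma start_add_one_le {r r' : ℕ} (h : r < r') : start req r + 1 ≤ start req r' := by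
  have : (r : ℝ) + 1 ≤ r' := by exact_mod_cast h
  unfold start
  linarith [bound_mono (req := req) h.le]

lemma start_strictMono : StrictMono (start req) := fun _ _ h =>
  (lt_add_one _).trans_le (start_add_one_le h)

lemma start_le_of_mem_fresh {r : ℕ} {x : ℝ} (hx : x ∈ fresh req r) : start req r ≤ x := hx.1

lemma le_of_mem_fresh {r : ℕ} {x : ℝ} (hx : x ∈ fresh req r) : x ≤ start req r + 1 / 2 := hx.2

lemma eq_of_mem_fresh {r r' : ℕ} {x : ℝ} (hx : x ∈ fresh req r) (hx' : x ∈ fresh req r') :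
    r = r' := by
  by_contra hne
  rcases Nat.lt_or_gt_of_ne hne with h | h
  · linarith [start_add_one_le (req := req) h, le_of_mem_fresh hx, start_le_of_mem_fresh hx']
  · linarith [start_add_one_le (req := req) h, start_le_of_mem_fresh hx, le_of_mem_fresh hx']

lemma lt_start_of_mem_reqSet {i r : ℕ} (h : i ≤ r) {x : ℝ} (hx : x ∈ reqSet req i) :
    x < start req r := by
  calc x ≤ |x| := le_abs_self x
    _ ≤ size (req i) := (abs_le_of_mem_ratIccUnion hx).trans (le_add_of_nonneg_left (by positivity))
    _ ≤ bound req r := size_le_bound h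
    _ < start req r := bound_lt_start r

lemma not_mem_reqSet_of_mem_fresh {i r : ℕ} (h : i ≤ r) {x : ℝ} (hx : x ∈ fresh req r) :
    x ∉ reqSet req i :=
  fun hx' => (lt_start_of_mem_reqSet h hx').not_ge hx.1

lemma isClosed_link (r : ℕ) : IsClosed (link req r) :=
  ((isClosed_ratIccUnion _).prod isClosed_Icc).union (isClosed_Icc.prod (isClosed_ratIccUnion _))

lemma link_subset_natCast_le_max (r : ℕ) : link req r ⊆ {z | (r : ℝ) ≤ max z.1 z.2} := by
  have hr := natCast_add_two_le_start (req := req) r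
  rintro z (⟨-, hz⟩ | ⟨hz, -⟩)
  · exact le_max_of_le_right (by linarith [start_le_of_mem_fresh hz] : (r : ℝ) ≤ z.2)
  · exact le_max_of_le_left (by linarith [start_le_of_mem_fresh hz] : (r : ℝ) ≤ z.1)

variable (k req)

def stage : ℕ → Set (ℝ × ℝ)
  | 0 => ∅
  | r + 1 => stage r ∪ {z | RelCliqueFreeOn k (stage r) (reqSet req r) ∧ z ∈ link req r}

def IsActive (r : ℕ) : Prop := RelCliqueFreeOn k (stage k req r) (reqSet req r)

def graph : Set (ℝ × ℝ) := ⋃ r, {z | IsActive k req r ∧ z ∈ link req r}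

variable {k req}

lemma mem_stage_iff {r : ℕ} {z : ℝ × ℝ} :
    z ∈ stage k req r ↔ ∃ i < r, IsActive k req i ∧ z ∈ link req i := by
  induction r with
  | zero => simp [stage]
  | succ r ih =>
    simp only [stage, mem_union, ih, mem_ofPred_eq, Nat.lt_succ_iff_lt_or_eq]
    constructor
    · rintro (⟨i, hi, h⟩ | h)
      exacts [⟨i, Or.inl hi, h⟩, ⟨r, Or.inr rfl, h⟩]
    · rintro ⟨i, hi | rfl, h⟩
      exacts [Or.inl ⟨i, hi, h⟩, Or.inr h]

lemma mem_graph_iff {z : ℝ × ℝ} : z ∈ graph k req ↔ ∃ r, IsActive k req r ∧ z ∈ link req r :=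
  mem_iUnion

lemma stage_subset_graph (r : ℕ) : stage k req r ⊆ graph k req := fun _ hz =>
  let ⟨i, _, h⟩ := mem_stage_iff.1 hz
  mem_graph_iff.2 ⟨i, h⟩

lemma link_subset_graph {r : ℕ} (hr : IsActive k req r) : link req r ⊆ graph k req :=
  fun _ hz => mem_graph_iff.2 ⟨r, hr, hz⟩

lemma graph_symm {x y : ℝ} (h : (x, y) ∈ graph k req) : (y, x) ∈ graph k req := by
  obtain ⟨r, hr, hxy⟩ := mem_graph_iff.1 h
  exact link_subset_graph hr (hxy.symm.imp (fun h => ⟨h.2, h.1⟩) fun h => ⟨h.2, h.1⟩)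

lemma graph_irrefl (x : ℝ) : (x, x) ∉ graph k req := by
  intro h
  obtain ⟨r, -, ⟨hA, hF⟩ | ⟨hF, hA⟩⟩ := mem_graph_iff.1 h <;>
    exact not_mem_reqSet_of_mem_fresh le_rfl hF hA

lemma isClosed_graph : IsClosed (graph k req) :=
  (locallyFinite_of_subset_natCast_le (continuous_fst.max continuous_snd)
    fun r _ hz => link_subset_natCast_le_max r hz.2).isClosed_iUnion
    fun r => isClosed_const.inter (isClosed_link r)

lemma exists_of_mem_graph_of_le {x y : ℝ} (h : (x, y) ∈ graph k req) (hxy : x ≤ y) :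
    ∃ r, IsActive k req r ∧ x ∈ reqSet req r ∧ y ∈ fresh req r := by
  obtain ⟨r, hr, ⟨hx, hy⟩ | ⟨hx, hy⟩⟩ := mem_graph_iff.1 h
  · exact ⟨r, hr, hx, hy⟩
  · exact absurd (hx.1.trans hxy) (lt_start_of_mem_reqSet le_rfl hy).not_ge

lemma mem_stage_of_mem_graph {r : ℕ} {x y : ℝ} (h : (x, y) ∈ graph k req)
    (hx : x < start req r) (hy : y < start req r) : (x, y) ∈ stage k req r := by
  obtain ⟨i, hi, hxy⟩ := mem_graph_iff.1 h
  have hir : start req i < start req r := by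
    rcases hxy with ⟨-, hy'⟩ | ⟨hx', -⟩
    exacts [hy'.1.trans_lt hy, hx'.1.trans_lt hx]
  exact mem_stage_iff.2 ⟨i, start_strictMono.lt_iff_lt.1 hir, hi, hxy⟩

lemma mem_reqSet_or_lt_of_mem_graph {r : ℕ} {c w : ℝ} (hc : c ∈ fresh req r)
    (h : (w, c) ∈ graph k req) : w ∈ reqSet req r ∨ ((req r).2 : ℝ) < w := by
  rcases le_total w c with hwc | hcw
  · obtain ⟨r', -, hw, hc'⟩ := exists_of_mem_graph_of_le h hwc
    exact Or.inl (eq_of_mem_fresh hc' hc ▸ hw)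
  · obtain ⟨r', -, hc', hw⟩ := exists_of_mem_graph_of_le (graph_symm h) hcw
    have hrr' : r < r' := not_le.1 fun h => not_mem_reqSet_of_mem_fresh h hc hc'
    exact Or.inr (((snd_le_size _).trans (size_le_bound hrr'.le)).trans_lt
      ((bound_lt_start r').trans_le (start_le_of_mem_fresh hw)))

lemma relCliqueFreeOn_graph (hk : k ≠ 0) : RelCliqueFreeOn (k + 1) (graph k req) univ := by
  rintro ⟨f, -, hf⟩
  obtain ⟨i₀, hi₀⟩ := Finite.exists_max f
  set g : Fin k → ℝ := fun m => f (i₀.succAbove m)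
  have hg : ∀ m, ∃ r, IsActive k req r ∧ g m ∈ reqSet req r ∧ f i₀ ∈ fresh req r := fun m =>
    exists_of_mem_graph_of_le (hf _ _ (Fin.succAbove_ne i₀ m)) (hi₀ _)
  obtain ⟨r, hr, -, hi₀r⟩ := hg ⟨0, Nat.pos_of_ne_zero hk⟩
  have hgr : ∀ m, g m ∈ reqSet req r := fun m => by
    obtain ⟨r', -, hm, hi₀r'⟩ := hg m
    rwa [eq_of_mem_fresh hi₀r hi₀r']
  refine hr ⟨g, hgr, fun m m' hmm' => mem_stage_of_mem_graph ?_
    (lt_start_of_mem_reqSet le_rfl (hgr m)) (lt_start_of_mem_reqSet le_rfl (hgr m'))⟩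
  exact hf _ _ (Fin.succAbove_right_injective.ne hmm')

lemma relCliqueFreeOn_two_graph_Icc : RelCliqueFreeOn 2 (graph k req) (Icc 0 1) := by
  rintro ⟨f, hf01, hf⟩
  have hedge : ∀ i j, i ≠ j → f i ≤ f j → False := fun i j hij hle => by
    obtain ⟨r, -, -, hr⟩ := exists_of_mem_graph_of_le (hf i j hij) hle
    linarith [(hf01 j).2, hr.1, natCast_add_two_le_start (req := req) r,
      Nat.cast_nonneg (α := ℝ) r]
  rcases le_total (f 0) (f 1) with h | h
  exacts [hedge 0 1 (by decide) h, hedge 1 0 (by decide) h]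

lemma interior_graph_nonempty (hreq : Function.Surjective req) (hk : 2 ≤ k) :
    (interior (graph k req)).Nonempty := by
  obtain ⟨r, hr⟩ := hreq ({(0, 1)}, 0)
  have hreqSet : reqSet req r = Icc 0 1 := by simp [reqSet, ratIccUnion, hr]
  have hactive : IsActive k req r :=
    (relCliqueFreeOn_two_graph_Icc.of_le hk).mono (stage_subset_graph r) hreqSet.subset
  have hsub : Ioo 0 1 ×ˢ Ioo (start req r) (start req r + 1 / 2) ⊆ graph k req :=
    fun z ⟨hz₁, hz₂⟩ => link_subset_graph hactive
      (Or.inl ⟨hreqSet ▸ Ioo_subset_Icc_self hz₁, Ioo_subset_Icc_self hz₂⟩)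
  refine ⟨(1 / 2, start req r + 1 / 4), interior_maximal hsub (isOpen_Ioo.prod isOpen_Ioo) ?_⟩
  exact ⟨⟨by norm_num, by norm_num⟩, by linarith, by linarith⟩

lemma interior_common_neighbours_nonempty (hreq : Function.Surjective req) (U W : Finset ℝ)
    (hUW : Disjoint U W) (hU : RelCliqueFreeOn k (graph k req) U) :
    (interior {c : ℝ | (∀ u ∈ U, (u, c) ∈ graph k req) ∧
      ∀ w ∈ W, (w, c) ∉ graph k req}).Nonempty := by
  obtain ⟨δ, hδ, hδU⟩ := hU.exists_thickening isClosed_graph U.finite_toSet.isCompact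
  obtain ⟨A, hUA, hAO⟩ := exists_ratIccUnion_between
    (isOpen_thickening.sdiff W.finite_toSet.isClosed) U
    fun u hu => ⟨self_subset_thickening hδ _ hu, Finset.disjoint_left.1 hUW hu⟩
  obtain ⟨b, hb⟩ := W.finite_toSet.bddAbove
  obtain ⟨q, hq⟩ := exists_nat_gt b
  obtain ⟨r, hr⟩ := hreq (A, q)
  have hreqSet : reqSet req r = ratIccUnion A := by rw [reqSet, hr]
  have hactive : IsActive k req r :=
    hδU.mono (stage_subset_graph r) (hreqSet ▸ hAO.trans sdiff_subset)
  have hsub : Ioo (start req r) (start req r + 1 / 2) ⊆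
      {c : ℝ | (∀ u ∈ U, (u, c) ∈ graph k req) ∧ ∀ w ∈ W, (w, c) ∉ graph k req} := by
    intro c hc
    have hc : c ∈ fresh req r := Ioo_subset_Icc_self hc
    refine ⟨fun u hu => link_subset_graph hactive (Or.inl ⟨hreqSet ▸ hUA hu, hc⟩),
      fun w hw hwc => ?_⟩
    rcases mem_reqSet_or_lt_of_mem_graph hc hwc with hwA | hqw
    · exact (hAO (hreqSet ▸ hwA)).2 hw
    · rw [hr] at hqw
      linarith [hb hw]
  exact ⟨start req r + 1 / 4, interior_maximal hsub isOpen_Ioo ⟨by linarith, by linarith⟩⟩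

end UniversalGraph

open UniversalGraph in
theorem exists_topologically_universal_ks_free_graph_on_real (s : ℕ) (hs : 3 < s) :
    ∃ E : Set (ℝ × ℝ), IsClosed E ∧ (interior E).Nonempty ∧
      (∀ x y : ℝ, (x, y) ∈ E → (y, x) ∈ E) ∧ (∀ x : ℝ, (x, x) ∉ E) ∧
      (¬ ∃ f : Fin s → ℝ, ∀ i j, i ≠ j → (f i, f j) ∈ E) ∧
      ∀ U W : Finset ℝ, Disjoint U W →
        (¬ ∃ f : Fin (s - 1) → ℝ, Function.Injective f ∧ (∀ i, f i ∈ U) ∧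
          ∀ i j, i ≠ j → (f i, f j) ∈ E) →
        (interior {c : ℝ | (∀ u ∈ U, (u, c) ∈ E) ∧ ∀ w ∈ W, (w, c) ∉ E}).Nonempty := by
  obtain ⟨k, rfl⟩ : ∃ k, s = k + 1 := ⟨s - 1, by omega⟩
  obtain ⟨req, hreq⟩ := exists_surjective_nat Requirement
  refine ⟨graph k req, isClosed_graph, interior_graph_nonempty hreq (by omega),
    fun _ _ => graph_symm, graph_irrefl,
    fun ⟨f, hf⟩ => relCliqueFreeOn_graph (by omega) ⟨f, fun _ => mem_univ _, hf⟩,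
    fun U W hUW hU => ?_⟩
  exact interior_common_neighbours_nonempty hreq U W hUW
    ((relCliqueFreeOn_iff_of_irrefl graph_irrefl).2 hU)
end
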